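/- arXiv:2011.07552 — 2 statements merged into one kernel-verified Lean document; each statement's English description precedes it below -/
import Mathlib

section
/- Let (m_x) be i.i.d. random variables with values in [m_min, m_max], 0 < m_min, and fix β₁,…,β_n > 0. For every n ≥ 2, all x, y ∈ {1,…,n}, and all nonnegative integers k, k' with k + k' < 2|x − y|, the random variables ⟨δ_x, (A_p^β)^k δ_x⟩ and ⟨δ_y, (A_p^β)^{k'} δ_y⟩ (where A_p^β is built from the random masses m₁,…,m_n) satisfy E[ ⟨δ_x,(A_p^β)^k δ_x⟩ · ⟨δ_y,(A_p^β)^{k'} δ_y⟩ ] = E[ ⟨δ_x,(A_p^β)^k δ_x⟩ ] · E[ ⟨δ_y,(A_p^β)^{k'} δ_y⟩ ]. -/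
open Matrix MeasureTheory ProbabilityTheory Filter

noncomputable section

/-- The discrete gradient `∇₋` (an `n × (n−1)` matrix, 0-indexed). -/
def nablaMinus (n : ℕ) : Matrix (Fin n) (Fin (n-1)) ℝ :=
  Matrix.of fun x y => if (x : ℕ) = (y : ℕ) then 1 else if (x : ℕ) = (y : ℕ) + 1 then -1 else 0

/-- The discrete gradient `∇₊ = −(∇₋)ᵀ`. -/
def nablaPlus (n : ℕ) : Matrix (Fin (n-1)) (Fin n) ℝ := -(nablaMinus n)ᵀ

/-- `M^{-1/2}` for the diagonal mass matrix. -/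
def invSqrtMass (n : ℕ) (m : Fin n → ℝ) : Matrix (Fin n) (Fin n) ℝ :=
  Matrix.diagonal fun x => 1 / Real.sqrt (m x)

/-- `M⁻¹`. -/
def massInv (n : ℕ) (m : Fin n → ℝ) : Matrix (Fin n) (Fin n) ℝ :=
  Matrix.diagonal fun x => (m x)⁻¹

/-- `A_p⁰ = M^{-1/2} (−Δ) M^{-1/2}` with `Δ = ∇₋∇₊`. -/
def Ap0 (n : ℕ) (m : Fin n → ℝ) : Matrix (Fin n) (Fin n) ℝ :=
  invSqrtMass n m * (-(nablaMinus n * nablaPlus n)) * invSqrtMass n m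

/-- `A_r⁰ = −∇₊ M⁻¹ ∇₋`. -/
def Ar0 (n : ℕ) (m : Fin n → ℝ) : Matrix (Fin (n-1)) (Fin (n-1)) ℝ :=
  -(nablaPlus n * massInv n m * nablaMinus n)

/-- `M_β^{-1/2} = diag(√(β_x/m_x))`. -/
def MbetaInvSqrt (n : ℕ) (m β : Fin n → ℝ) : Matrix (Fin n) (Fin n) ℝ :=
  Matrix.diagonal fun x => Real.sqrt (β x / m x)

/-- `M_β⁻¹ = diag(β_x/m_x)`. -/
def MbetaInv (n : ℕ) (m β : Fin n → ℝ) : Matrix (Fin n) (Fin n) ℝ :=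
  Matrix.diagonal fun x => β x / m x

/-- `β° = diag(β₁,…,β_{n−1})`. -/
def betaCirc (n : ℕ) (β : Fin n → ℝ) : Matrix (Fin (n-1)) (Fin (n-1)) ℝ :=
  Matrix.diagonal fun y => β (Fin.castLE (Nat.sub_le n 1) y)

/-- `(β°)^{1/2}`. -/
def betaCircSqrt (n : ℕ) (β : Fin n → ℝ) : Matrix (Fin (n-1)) (Fin (n-1)) ℝ :=
  Matrix.diagonal fun y => Real.sqrt (β (Fin.castLE (Nat.sub_le n 1) y))

/-- `A_p^β = M_β^{-1/2} (−∇₋ β° ∇₊) M_β^{-1/2}`. -/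
def ApBeta (n : ℕ) (m β : Fin n → ℝ) : Matrix (Fin n) (Fin n) ℝ :=
  MbetaInvSqrt n m β * (-(nablaMinus n * betaCirc n β * nablaPlus n)) * MbetaInvSqrt n m β

/-- `A_r^β = (β°)^{1/2} (−∇₊ M_β⁻¹ ∇₋) (β°)^{1/2}`. -/
def ArBeta (n : ℕ) (m β : Fin n → ℝ) : Matrix (Fin (n-1)) (Fin (n-1)) ℝ :=
  betaCircSqrt n β * (-(nablaPlus n * MbetaInv n m β * nablaMinus n)) * betaCircSqrt n β

/-- The function `𝔣(t) = √t coth √t` for `t > 0`, `𝔣(0) = 1`. -/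
def sqrtCoth (t : ℝ) : ℝ :=
  if t = 0 then 1 else Real.sqrt t * (Real.cosh (Real.sqrt t) / Real.sinh (Real.sqrt t))

/-- The (random) average thermal energy at site `x` (0-indexed; site `x+1` in the paper's
1-based convention), given masses `m` and local inverse temperatures `βv`.  The `A_r^β` term
is omitted at the last site. -/
def avgThermalEnergy (n : ℕ) (m βv : Fin n → ℝ) (x : Fin n) : ℝ :=
  (1 / βv x) *
    ((if h : (x : ℕ) < n - 1 then cfc sqrtCoth (ArBeta n m βv) ⟨(x : ℕ), h⟩ ⟨(x : ℕ), h⟩ else 0)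
      + cfc sqrtCoth (ApBeta n m βv) x x
      - (m x / βv x) / (∑ z, m z / βv z))

/-- The local inverse-temperature vector `β_x = β(x/n)` (1-based sites). -/
def betaVec (n : ℕ) (β : ℝ → ℝ) : Fin n → ℝ := fun x => β ((((x : ℕ) : ℝ) + 1) / n)

/-- Average thermal energy at site `x` built from a macroscopic temperature profile `β`. -/
def avgThermalProfile (n : ℕ) (β : ℝ → ℝ) (m : Fin n → ℝ) (x : Fin n) : ℝ :=
  avgThermalEnergy n m (betaVec n β) x

/-- The 0-based index in `Fin n` of the (1-based) site `max 1 k` (clamped to stay in range). -/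
def siteIdx (n : ℕ) (hn : 0 < n) (k : ℕ) : Fin n := ⟨min (max 1 k - 1) (n-1), by omega⟩

end


/-!
`A_p^β` is tridiagonal and its entry `(u, v)` involves only the masses `m_u` and `m_v`. Hence
`((A_p^β)^k)_{xx}`, a sum over closed nearest-neighbour paths of length `k` from `x`, is a function
of the masses in the window `[x - k/2, x + k/2]` alone. When `k + k' < 2|x - y|` the windows of
`x` and `y` are disjoint, so the two diagonal entries are functions of disjoint families of
independent masses, hence independent.
-/

open Function

namespace ProbabilityTheory

theorem iIndepFun.integral_mul_eq_mul_integral_of_dependsOn {Ω ι E : Type*}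
    [MeasurableSpace Ω] {μ : Measure Ω} [MeasurableSpace E] [Nonempty E] [DecidableEq ι]
    {X : ι → Ω → E} (hX : iIndepFun X μ) (hmeas : ∀ i, Measurable (X i))
    {S T : Finset ι} (hST : Disjoint S T) {φ ψ : (ι → E) → ℝ}
    (hφ : Measurable φ) (hψ : Measurable ψ) (hφS : DependsOn φ S) (hψT : DependsOn ψ T) :
    ∫ ω, φ (fun i => X i ω) * ψ (fun i => X i ω) ∂μ
      = (∫ ω, φ (fun i => X i ω) ∂μ) * ∫ ω, ψ (fun i => X i ω) ∂μ := by
  obtain ⟨x₀⟩ : Nonempty (ι → E) := inferInstance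
  have factor : ∀ {U : Finset ι} {χ : (ι → E) → ℝ}, DependsOn χ U →
      ∀ ω, χ (updateFinset x₀ U fun i : U => X i ω) = χ fun i => X i ω :=
    fun hχ ω => hχ fun i hi => by simp [updateFinset, Finset.mem_coe.1 hi]
  have hrestrict : ∀ U : Finset ι, Measurable fun ω (i : U) => X i ω :=
    fun U => measurable_pi_lambda _ fun i => hmeas i
  have := (hX.indepFun_finset S T hST hmeas).integral_fun_comp_mul_comp
    (f := fun v => φ (updateFinset x₀ S v)) (g := fun v => ψ (updateFinset x₀ T v))
    (hrestrict S).aemeasurable (hrestrict T).aemeasurable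
    (hφ.comp measurable_updateFinset).aestronglyMeasurable
    (hψ.comp measurable_updateFinset).aestronglyMeasurable
  simpa only [factor hφS, factor hψT] using this

end ProbabilityTheory

namespace Matrix

section Banded

variable {R : Type*} [Semiring R] {n : ℕ}

def IsBanded (A : Matrix (Fin n) (Fin n) R) (w : ℕ) : Prop :=
  ∀ u v : Fin n, (u : ℕ) + w < v ∨ (v : ℕ) + w < u → A u v = 0

theorem isBanded_one : IsBanded (1 : Matrix (Fin n) (Fin n) R) 0 := fun u v h =>
  one_apply_ne fun huv => by subst huv; omega

theorem IsBanded.mul {A B : Matrix (Fin n) (Fin n) R} {a b : ℕ} (hA : A.IsBanded a)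
    (hB : B.IsBanded b) : (A * B).IsBanded (a + b) := fun u v huv => by
  rw [mul_apply]
  refine Finset.sum_eq_zero fun w _ => ?_
  by_cases huw : (u : ℕ) + a < w ∨ (w : ℕ) + a < u
  · rw [hA u w huw, zero_mul]
  · rw [hB w v (by omega), mul_zero]

theorem IsBanded.pow {A : Matrix (Fin n) (Fin n) R} {w : ℕ} (hA : A.IsBanded w) :
    ∀ k : ℕ, (A ^ k).IsBanded (w * k)
  | 0 => by simpa using isBanded_one
  | k + 1 => by simpa [pow_succ, Nat.mul_succ] using (hA.pow k).mul hA

/-- A path of length `j` from `u` ending at `x` stays within distance `r` of `x` as soon as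
`|u - x| + j ≤ 2r + 1`, so it only sees entries of a tridiagonal matrix inside that window. -/
theorem IsBanded.pow_apply_eq_of_eqOn_window {A A' : Matrix (Fin n) (Fin n) R}
    (hA : A.IsBanded 1) (hA' : A'.IsBanded 1) {x : Fin n} {r : ℕ}
    (hAA' : ∀ u v : Fin n, (x : ℕ) ≤ u + r → (u : ℕ) ≤ x + r → (x : ℕ) ≤ v + r →
      (v : ℕ) ≤ x + r → A u v = A' u v) :
    ∀ (j : ℕ) (u : Fin n), (u : ℕ) + j ≤ x + 2 * r + 1 → (x : ℕ) + j ≤ u + 2 * r + 1 →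
      (A ^ j) u x = (A' ^ j) u x
  | 0, u, _, _ => by rw [pow_zero, pow_zero]
  | j + 1, u, h₁, h₂ => by
    rw [pow_succ', pow_succ', mul_apply, mul_apply]
    refine Finset.sum_congr rfl fun v _ => ?_
    by_cases huv : (u : ℕ) + 1 < v ∨ (v : ℕ) + 1 < u
    · rw [hA u v huv, hA' u v huv, zero_mul, zero_mul]
    by_cases hvx : (v : ℕ) + j < x ∨ (x : ℕ) + j < v
    · rw [(hA.pow j) v x (by omega), (hA'.pow j) v x (by omega), mul_zero, mul_zero]
    rw [hAA' u v (by omega) (by omega) (by omega) (by omega),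
      IsBanded.pow_apply_eq_of_eqOn_window hA hA' hAA' j v (by omega) (by omega)]

end Banded

theorem measurable_pow_apply {α ι R : Type*} [MeasurableSpace α] [Fintype ι] [DecidableEq ι]
    [Semiring R] [MeasurableSpace R] [MeasurableAdd₂ R] [MeasurableMul₂ R]
    {A : α → Matrix ι ι R} (hA : ∀ u v, Measurable fun t => A t u v) :
    ∀ (k : ℕ) (u v : ι), Measurable fun t => (A t ^ k) u v
  | 0, u, v => by simpa only [pow_zero] using measurable_const
  | k + 1, u, v => by
    simp only [pow_succ, mul_apply]
    exact Finset.measurable_sum _ fun w _ => (measurable_pow_apply hA k u w).mul (hA w v)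

end Matrix

section ApBeta

variable (n : ℕ) (β : Fin n → ℝ)

theorem ApBeta_apply (m : Fin n → ℝ) (u v : Fin n) :
    ApBeta n m β u v = Real.sqrt (β u / m u) *
      (-(nablaMinus n * betaCirc n β * nablaPlus n)) u v * Real.sqrt (β v / m v) := by
  rw [ApBeta, MbetaInvSqrt, mul_diagonal, diagonal_mul]

theorem isBanded_ApBeta (m : Fin n → ℝ) : (ApBeta n m β).IsBanded 1 := fun u v huv => by
  suffices (nablaMinus n * betaCirc n β * nablaPlus n) u v = 0 by
    rw [ApBeta_apply, neg_apply, this, neg_zero, mul_zero, zero_mul]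
  rw [mul_apply]
  refine Finset.sum_eq_zero fun z _ => ?_
  simp only [betaCirc, mul_diagonal, nablaPlus, Matrix.neg_apply, Matrix.transpose_apply,
    nablaMinus, of_apply]
  split_ifs <;> first | omega | ring

theorem measurable_ApBeta_pow_apply (k : ℕ) (u v : Fin n) :
    Measurable fun m : ℕ → ℝ => (ApBeta n (fun z => m z) β ^ k) u v := by
  refine Matrix.measurable_pow_apply (fun u v => ?_) k u v
  simp only [ApBeta_apply]
  fun_prop

theorem dependsOn_ApBeta_pow_apply_self (x : Fin n) (k : ℕ) :
    DependsOn (fun m : ℕ → ℝ => (ApBeta n (fun z => m z) β ^ k) x x)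
      ↑(Finset.Icc ((x : ℕ) - k / 2) (x + k / 2)) := fun m m' hmm' => by
  have hwindow : ∀ z : Fin n, (x : ℕ) ≤ z + k / 2 → (z : ℕ) ≤ x + k / 2 → m z = m' z :=
    fun z h₁ h₂ => hmm' z (by simp only [Finset.coe_Icc, Set.mem_Icc]; omega)
  refine (isBanded_ApBeta n β _).pow_apply_eq_of_eqOn_window (isBanded_ApBeta n β _) (r := k / 2)
    (fun u v hu₁ hu₂ hv₁ hv₂ => ?_) k x (by omega) (by omega)
  rw [ApBeta_apply, ApBeta_apply, hwindow u hu₁ hu₂, hwindow v hv₁ hv₂]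

end ApBeta

theorem Finset.disjoint_Icc_half_of_lt_two_mul_abs_sub {x y k k' : ℕ}
    (h : (k : ℤ) + k' < 2 * |(x : ℤ) - y|) :
    Disjoint (Icc (x - k / 2) (x + k / 2)) (Icc (y - k' / 2) (y + k' / 2)) := by
  refine disjoint_left.2 fun i hi hi' => ?_
  rw [mem_Icc] at hi hi'
  rcases abs_cases ((x : ℤ) - y) with ⟨habs, _⟩ | ⟨habs, _⟩ <;> rw [habs] at h <;> omega

open Matrix MeasureTheory ProbabilityTheory in
theorem stmt2_general {Ω : Type*} [MeasurableSpace Ω] (μ : Measure Ω)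
    (mass : ℕ → Ω → ℝ) (hmeas : ∀ i, Measurable (mass i))
    (hindep : iIndepFun mass μ)
    (n : ℕ) (β : Fin n → ℝ)
    (x y : Fin n) (k k' : ℕ) (hkk' : (k : ℤ) + (k' : ℤ) < 2 * |(x : ℤ) - (y : ℤ)|) :
    ∫ ω, (((ApBeta n (fun z => mass z ω) β) ^ k) x x)
        * (((ApBeta n (fun z => mass z ω) β) ^ k') y y) ∂μ
      = (∫ ω, ((ApBeta n (fun z => mass z ω) β) ^ k) x x ∂μ)
        * (∫ ω, ((ApBeta n (fun z => mass z ω) β) ^ k') y y ∂μ) :=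
  hindep.integral_mul_eq_mul_integral_of_dependsOn hmeas
    (Finset.disjoint_Icc_half_of_lt_two_mul_abs_sub hkk')
    (measurable_ApBeta_pow_apply n β k x x) (measurable_ApBeta_pow_apply n β k' y y)
    (dependsOn_ApBeta_pow_apply_self n β x k) (dependsOn_ApBeta_pow_apply_self n β y k')

open Matrix MeasureTheory ProbabilityTheory in
/-- for i.i.d. masses and `k + k' < 2|x − y|`, the diagonal entries
`((A_p^β)^k)_{xx}` and `((A_p^β)^{k'})_{yy}` are uncorrelated (the expectation of their
product factorizes). -/
theorem stmt2 {Ω : Type*} [MeasurableSpace Ω] (μ : Measure Ω) [IsProbabilityMeasure μ]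
    (mass : ℕ → Ω → ℝ) (hmeas : ∀ i, Measurable (mass i))
    (hindep : iIndepFun mass μ)
    (hident : ∀ i j, IdentDistrib (mass i) (mass j) μ μ)
    (mmin mmax : ℝ) (h0 : 0 < mmin) (hmm : mmin ≤ mmax)
    (hrange : ∀ i ω, mass i ω ∈ Set.Icc mmin mmax)
    (n : ℕ) (hn : 2 ≤ n) (β : Fin n → ℝ) (hβ : ∀ x, 0 < β x)
    (x y : Fin n) (k k' : ℕ) (hkk' : (k : ℤ) + (k' : ℤ) < 2 * |(x : ℤ) - (y : ℤ)|) :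
    ∫ ω, (((ApBeta n (fun z => mass z ω) β) ^ k) x x)
        * (((ApBeta n (fun z => mass z ω) β) ^ k') y y) ∂μ
      = (∫ ω, ((ApBeta n (fun z => mass z ω) β) ^ k) x x ∂μ)
        * (∫ ω, ((ApBeta n (fun z => mass z ω) β) ^ k') y y ∂μ) :=
  stmt2_general μ mass hmeas hindep n β x y k k' hkk'
end

section
/- Fix 0 < η < 1 and 0 < m_min ≤ m_max < ∞. There exist a constant c > 0 and an integer N, depending only on η, m_min, m_max, such that for every n ≥ N the following holds. Let m ∈ [m_min, m_max]ⁿ, let φ ∈ ℝⁿ be a unit eigenvector of A_p⁰ = M^{−1/2}(−Δ)M^{−1/2} with eigenvalue ω² (ω ≥ 0), and set φ̃ = M^{−1/2}φ. Suppose there is a set of consecutive integers J ⊆ {0,1,…,n} with |J| ≤ 2n^η such that |φ̃_x| ≤ n^{−1/η} for every x ∈ {1,…,n} with x ∉ J. Then ω > 0 and 1/ω ≤ c·n^{3η/2}; moreover, for every x ∈ {1,…,n−1} with x ∉ J and x+1 ∉ J, the unit eigenvector φ^r := ω^{−1}·∇₊φ̃ of A_r⁰ = −∇₊M^{−1}∇₋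 satisfies |φ^r_x| ≤ 2c·n^{−1/η + 3η/2}. -/
open Matrix MeasureTheory ProbabilityTheory Filter

/-! The energy identity `‖∇₊ M^{-1/2} φ‖² = ⟨φ, A_p⁰ φ⟩ = ω²` makes `φ̃ = M^{-1/2} φ`
Lipschitz with constant `ω`. Since `∑ m_x φ̃_x² = 1` while the mass off `J` is `O(n^{1-2/η})`,
some site of `J` carries `|φ̃| ≳ n^{-η/2}`; within `|J| ≤ 2n^η` steps of it lies a site off `J`,
where `|φ̃| ≤ n^{-1/η}`, so `n^{-η/2} ≲ n^η ω`. Off `J`, finally,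
`|φ^r_x| = |φ̃_{x+1} - φ̃_x| / ω ≤ 2 n^{-1/η} / ω`. -/

lemma nablaPlus_mulVec_apply (n : ℕ) (v : Fin n → ℝ) (y : Fin (n - 1))
    (h1 : (y : ℕ) < n) (h2 : (y : ℕ) + 1 < n) :
    (nablaPlus n *ᵥ v) y = v ⟨y + 1, h2⟩ - v ⟨y, h1⟩ := by
  have key : ∀ x : Fin n, nablaPlus n y x * v x
      = (if x = ⟨y + 1, h2⟩ then v x else 0) - (if x = ⟨y, h1⟩ then v x else 0) := by
    intro x
    simp only [nablaPlus, nablaMinus, Matrix.neg_apply, Matrix.transpose_apply, Matrix.of_apply,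
      Fin.ext_iff]
    split_ifs <;> simp_all
  simp only [mulVec, dotProduct]
  rw [Finset.sum_congr rfl fun x _ => key x, Finset.sum_sub_distrib, Finset.sum_ite_eq',
    Finset.sum_ite_eq']
  simp

lemma dotProduct_neg_laplacian_mulVec (n : ℕ) (ψ : Fin n → ℝ) :
    ψ ⬝ᵥ (-(nablaMinus n * nablaPlus n)) *ᵥ ψ
      = (nablaPlus n *ᵥ ψ) ⬝ᵥ (nablaPlus n *ᵥ ψ) := by
  have hψ : ψ ᵥ* nablaMinus n = -(nablaPlus n *ᵥ ψ) := by
    rw [nablaPlus, neg_mulVec, ← vecMul_transpose, transpose_transpose, neg_neg]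
  rw [neg_mulVec, dotProduct_neg, ← mulVec_mulVec, dotProduct_mulVec, hψ, neg_dotProduct, neg_neg]

lemma dotProduct_Ap0_mulVec (n : ℕ) (m φ : Fin n → ℝ) :
    φ ⬝ᵥ Ap0 n m *ᵥ φ
      = (nablaPlus n *ᵥ (invSqrtMass n m *ᵥ φ)) ⬝ᵥ (nablaPlus n *ᵥ (invSqrtMass n m *ᵥ φ)) := by
  have hsymm : φ ᵥ* invSqrtMass n m = invSqrtMass n m *ᵥ φ := by
    rw [← vecMul_transpose, invSqrtMass, diagonal_transpose]
  rw [Ap0, ← mulVec_mulVec, ← mulVec_mulVec, dotProduct_mulVec, hsymm,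
    dotProduct_neg_laplacian_mulVec]

lemma abs_nablaPlus_invSqrtMass_mulVec_le {n : ℕ} {m φ : Fin n → ℝ} {ω : ℝ} (hω : 0 ≤ ω)
    (heig : Ap0 n m *ᵥ φ = ω ^ 2 • φ) (hunit : φ ⬝ᵥ φ = 1) (y : Fin (n - 1)) :
    |(nablaPlus n *ᵥ (invSqrtMass n m *ᵥ φ)) y| ≤ ω := by
  set g := nablaPlus n *ᵥ (invSqrtMass n m *ᵥ φ)
  have henergy : g ⬝ᵥ g = ω ^ 2 := by
    rw [← dotProduct_Ap0_mulVec, heig, dotProduct_smul, hunit, smul_eq_mul, mul_one]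
  refine abs_le_of_sq_le_sq ?_ hω
  rw [← henergy, dotProduct, sq]
  exact Finset.single_le_sum (fun i _ => mul_self_nonneg (g i)) (Finset.mem_univ y)

lemma sum_mul_sq_invSqrtMass_mulVec {n : ℕ} {m : Fin n → ℝ} (hm : ∀ x, 0 < m x)
    (φ : Fin n → ℝ) : ∑ x, m x * (invSqrtMass n m *ᵥ φ) x ^ 2 = φ ⬝ᵥ φ := by
  refine Finset.sum_congr rfl fun x _ => ?_
  have hsqrt : Real.sqrt (m x) ^ 2 = m x := Real.sq_sqrt (hm x).le
  rw [invSqrtMass, mulVec_diagonal, mul_pow, div_pow, hsqrt]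
  field_simp [(hm x).ne']

lemma abs_sub_le_of_abs_nablaPlus_mulVec_le {n : ℕ} {v : Fin n → ℝ} {L : ℝ}
    (hv : ∀ y, |(nablaPlus n *ᵥ v) y| ≤ L) (i j : Fin n) :
    |v i - v j| ≤ |(i : ℝ) - j| * L := by
  wlog hij : j ≤ i generalizing i j
  · rw [abs_sub_comm, abs_sub_comm (i : ℝ)]
    exact this j i (le_of_not_ge hij)
  obtain ⟨k, hk⟩ := Nat.exists_eq_add_of_le (Fin.le_def.1 hij)
  suffices h : ∀ k (a : ℕ) (ha : a < n) (hk : a + k < n), |v ⟨a + k, hk⟩ - v ⟨a, ha⟩| ≤ k * L by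
    have hi : i = ⟨j + k, hk ▸ i.isLt⟩ := Fin.ext hk
    rw [hi]
    simpa using h k j j.isLt _
  intro k
  induction k with
  | zero => intro a ha hk; simp
  | succ k ih =>
    intro a ha hk
    have hstep := hv ⟨a + k, by omega⟩
    rw [nablaPlus_mulVec_apply n v _ (by dsimp only; omega) (by dsimp only; omega)] at hstep
    calc |v ⟨a + (k + 1), hk⟩ - v ⟨a, ha⟩|
        ≤ |v ⟨a + (k + 1), hk⟩ - v ⟨a + k, by omega⟩| + |v ⟨a + k, by omega⟩ - v ⟨a, ha⟩| :=
          abs_sub_le _ _ _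
      _ ≤ L + k * L := add_le_add hstep (ih a ha _)
      _ = (k + 1 : ℕ) * L := by push_cast; ring

lemma exists_notMem_near (s : Finset ℕ) {n k : ℕ} (hk : k < n) (hs : s.card < n) :
    ∃ k' < n, k' ∉ s ∧ |(k : ℝ) - k'| ≤ s.card := by
  set a := min k (n - 1 - s.card)
  obtain ⟨k', hk'W, hk's⟩ := Finset.exists_mem_notMem_of_card_lt_card
    (s := s) (t := Finset.Icc a (a + s.card)) (by rw [Nat.card_Icc]; omega)
  rw [Finset.mem_Icc] at hk'W
  refine ⟨k', by omega, hk's, ?_⟩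
  rw [abs_sub_le_iff, sub_le_iff_le_add, sub_le_iff_le_add]
  constructor <;> norm_cast <;> omega

lemma sum_mul_sq_le_card_mul {ι : Type*} (s : Finset ι) {m ψ : ι → ℝ} {M b : ℝ}
    (hm0 : ∀ x, 0 ≤ m x) (hM : ∀ x, m x ≤ M) (hψ : ∀ x ∈ s, |ψ x| ≤ b) :
    ∑ x ∈ s, m x * ψ x ^ 2 ≤ s.card * (M * b ^ 2) := by
  rw [← nsmul_eq_mul]
  refine Finset.sum_le_card_nsmul s _ _ fun x hx => ?_
  have hsq : ψ x ^ 2 ≤ b ^ 2 := by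
    rw [← sq_abs]
    exact pow_le_pow_left₀ (abs_nonneg _) (hψ x hx) 2
  exact mul_le_mul (hM x) hsq (sq_nonneg _) ((hm0 x).trans (hM x))

section

variable {n : ℕ} {m ψ : Fin n → ℝ} {J : Finset ℕ} {M δ t : ℝ}

lemma exists_mem_le_abs_of_localized (hmass : ∑ x, m x * ψ x ^ 2 = 1) (hm0 : ∀ x, 0 ≤ m x)
    (hM : ∀ x, m x ≤ M) (hM0 : 0 ≤ M) (hsmall : ∀ x : Fin n, (x : ℕ) + 1 ∉ J → |ψ x| ≤ δ)
    (hδ : n * (M * δ ^ 2) < 1 / 2) (ht : J.card * (M * t ^ 2) ≤ 1 / 2) :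
    ∃ x : Fin n, (x : ℕ) + 1 ∈ J ∧ t ≤ |ψ x| := by
  by_contra! hcon
  set inJ := Finset.univ.filter fun x : Fin n => (x : ℕ) + 1 ∈ J
  set offJ := Finset.univ.filter fun x : Fin n => (x : ℕ) + 1 ∉ J
  have hinJ : ∑ x ∈ inJ, m x * ψ x ^ 2 ≤ 1 / 2 := by
    have hcard : inJ.card ≤ J.card :=
      Finset.card_le_card_of_injOn (fun x : Fin n => (x : ℕ) + 1)
        (fun x hx => (Finset.mem_filter.1 hx).2) fun a _ b _ hab => Fin.ext (by simpa using hab)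
    calc ∑ x ∈ inJ, m x * ψ x ^ 2 ≤ inJ.card * (M * t ^ 2) :=
          sum_mul_sq_le_card_mul _ hm0 hM fun x hx => (hcon x (Finset.mem_filter.1 hx).2).le
      _ ≤ J.card * (M * t ^ 2) := by gcongr
      _ ≤ 1 / 2 := ht
  have hoffJ : ∑ x ∈ offJ, m x * ψ x ^ 2 < 1 / 2 := by
    have hcard : offJ.card ≤ n := (Finset.card_filter_le _ _).trans (by simp)
    calc ∑ x ∈ offJ, m x * ψ x ^ 2 ≤ offJ.card * (M * δ ^ 2) :=
          sum_mul_sq_le_card_mul _ hm0 hM fun x hx => hsmall x (Finset.mem_filter.1 hx).2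
      _ ≤ n * (M * δ ^ 2) := by gcongr
      _ < 1 / 2 := hδ
  have hsplit := Finset.sum_filter_add_sum_filter_not Finset.univ
    (fun x : Fin n => (x : ℕ) + 1 ∈ J) fun x => m x * ψ x ^ 2
  linarith

lemma le_add_card_mul_of_localized {ω : ℝ} (hmass : ∑ x, m x * ψ x ^ 2 = 1)
    (hm0 : ∀ x, 0 ≤ m x) (hM : ∀ x, m x ≤ M) (hM0 : 0 ≤ M)
    (hlip : ∀ i j : Fin n, |ψ i - ψ j| ≤ |(i : ℝ) - j| * ω) (hω : 0 ≤ ω) (hJn : J.card < n)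
    (hsmall : ∀ x : Fin n, (x : ℕ) + 1 ∉ J → |ψ x| ≤ δ)
    (hδ : n * (M * δ ^ 2) < 1 / 2) (ht : J.card * (M * t ^ 2) ≤ 1 / 2) :
    t ≤ δ + J.card * ω := by
  obtain ⟨x, -, hx⟩ := exists_mem_le_abs_of_localized hmass hm0 hM hM0 hsmall hδ ht
  obtain ⟨k, hkn, hkJ, hdist⟩ := exists_notMem_near (J.image (· - 1)) x.isLt
    (Finset.card_image_le.trans_lt hJn)
  have hk : |ψ ⟨k, hkn⟩| ≤ δ :=
    hsmall _ fun h => hkJ (Finset.mem_image.2 ⟨k + 1, h, Nat.add_sub_cancel k 1⟩)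
  have hslope : |ψ x - ψ ⟨k, hkn⟩| ≤ J.card * ω :=
    (hlip _ _).trans <| mul_le_mul_of_nonneg_right
      (hdist.trans (by exact_mod_cast Finset.card_image_le)) hω
  linarith [abs_sub_abs_le_abs_sub (ψ x) (ψ ⟨k, hkn⟩)]

lemma one_le_mul_rpow_mul_of_localized {η ω : ℝ} (hmass : ∑ x, m x * ψ x ^ 2 = 1)
    (hm0 : ∀ x, 0 ≤ m x) (hM : ∀ x, m x ≤ M) (hM0 : 0 < M)
    (hlip : ∀ i j : Fin n, |ψ i - ψ j| ≤ |(i : ℝ) - j| * ω) (hω : 0 ≤ ω)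
    (hJ : (J.card : ℝ) ≤ 2 * (n : ℝ) ^ η)
    (hsmall : ∀ x : Fin n, (x : ℕ) + 1 ∉ J → |ψ x| ≤ (n : ℝ) ^ (-1 / η))
    (hregime : (n : ℝ) * (M * ((n : ℝ) ^ (-1 / η)) ^ 2) < 1 / 2 ∧
      2 * (n : ℝ) ^ η < n ∧ 4 * √M * (n : ℝ) ^ (η / 2) * (n : ℝ) ^ (-1 / η) ≤ 1) :
    1 ≤ 8 * √M * (n : ℝ) ^ (3 * η / 2) * ω := by
  obtain ⟨hδ, hJn, hδt⟩ := hregime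
  have hn : (0 : ℝ) < n := by linarith [Real.rpow_nonneg (Nat.cast_nonneg n) η]
  set δ := (n : ℝ) ^ (-1 / η)
  set s := √M
  set p := (n : ℝ) ^ (η / 2)
  have hs : 0 < s := Real.sqrt_pos.2 hM0
  have hp : 0 < p := Real.rpow_pos_of_pos hn _
  have hMs : M = s ^ 2 := (Real.sq_sqrt hM0.le).symm
  have hp2 : (n : ℝ) ^ η = p ^ 2 := by rw [sq, ← Real.rpow_add hn, add_halves]
  have hp3 : (n : ℝ) ^ (3 * η / 2) = p ^ 3 := by
    rw [pow_succ, ← hp2, ← Real.rpow_add hn]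
    ring_nf
  -- `t = (4 M n^η)^{-1/2}` is the height that `∑ m ψ² = 1` forces at some site of `J`
  set t := (2 * s * p)⁻¹
  have hst : 2 * s * p * t = 1 := mul_inv_cancel₀ (by positivity)
  have ht : J.card * (M * t ^ 2) ≤ 1 / 2 := by
    calc (J.card : ℝ) * (M * t ^ 2) ≤ 2 * p ^ 2 * (M * t ^ 2) := by
          rw [← hp2]; gcongr
      _ = 1 / 2 := by rw [hMs]; linear_combination (2 * s * p * t + 1) / 2 * hst
  have hpeak := le_add_card_mul_of_localized hmass hm0 hM hM0.le hlip hω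
    (by exact_mod_cast hJ.trans_lt hJn) hsmall hδ ht
  have hδt' : 2 * δ ≤ t :=
    le_of_mul_le_mul_left (by linarith) (by positivity : 0 < 2 * s * p)
  have hslope : (J.card : ℝ) * ω ≤ 2 * p ^ 2 * ω := by
    rw [← hp2]; exact mul_le_mul_of_nonneg_right hJ hω
  have htω : t ≤ 4 * p ^ 2 * ω := by linarith
  calc 1 = 2 * s * p * t := hst.symm
    _ ≤ 2 * s * p * (4 * p ^ 2 * ω) := by gcongr
    _ = 8 * s * (n : ℝ) ^ (3 * η / 2) * ω := by rw [hp3]; ring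

end

lemma eventually_mul_rpow_lt {a : ℝ} (ha : a < 0) (C : ℝ) {ε : ℝ} (hε : 0 < ε) :
    ∀ᶠ n : ℕ in atTop, C * (n : ℝ) ^ a < ε := by
  have h := ((tendsto_rpow_neg_atTop (neg_pos.2 ha)).comp tendsto_natCast_atTop_atTop).const_mul C
  rw [neg_neg, mul_zero] at h
  exact h.eventually_lt_const hε

lemma eventually_localization_regime {η M : ℝ} (hη : 0 < η) (hη1 : η < 1) :
    ∀ᶠ n : ℕ in atTop, (n : ℝ) * (M * ((n : ℝ) ^ (-1 / η)) ^ 2) < 1 / 2 ∧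
      2 * (n : ℝ) ^ η < n ∧ 4 * √M * (n : ℝ) ^ (η / 2) * (n : ℝ) ^ (-1 / η) ≤ 1 := by
  have hη' : 1 < 1 / η := by rw [lt_div_iff₀ hη]; linarith
  filter_upwards
    [eventually_mul_rpow_lt (a := 1 - 2 / η) (by linarith [show 2 / η = 2 * (1 / η) by ring])
      M (by norm_num : (0 : ℝ) < 1 / 2),
    eventually_mul_rpow_lt (a := η - 1) (by linarith) 2 one_pos,
    eventually_mul_rpow_lt (a := η / 2 - 1 / η) (by linarith) (4 * √M) one_pos,
    eventually_gt_atTop 0] with n h1 h2 h3 hn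
  have hn : (0 : ℝ) < n := by exact_mod_cast hn
  refine ⟨?_, ?_, ?_⟩
  · convert h1 using 1
    rw [show 1 - 2 / η = 1 + -1 / η + -1 / η by ring, Real.rpow_add hn, Real.rpow_add hn,
      Real.rpow_one]
    ring
  · have h := mul_lt_mul_of_pos_right h2 hn
    rwa [one_mul, mul_assoc, ← Real.rpow_add_one hn.ne', sub_add_cancel] at h
  · calc 4 * √M * (n : ℝ) ^ (η / 2) * (n : ℝ) ^ (-1 / η)
        = 4 * √M * (n : ℝ) ^ (η / 2 - 1 / η) := by
          rw [sub_eq_add_neg, Real.rpow_add hn, neg_div]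
          ring
      _ ≤ 1 := h3.le

lemma abs_nablaPlus_mulVec_le_of_localized {n : ℕ} {v : Fin n → ℝ} {J : Finset ℕ} {δ : ℝ}
    (hsmall : ∀ x : Fin n, (x : ℕ) + 1 ∉ J → |v x| ≤ δ) (y : Fin (n - 1))
    (hy1 : (y : ℕ) + 1 ∉ J) (hy2 : (y : ℕ) + 2 ∉ J) :
    |(nablaPlus n *ᵥ v) y| ≤ 2 * δ := by
  rw [nablaPlus_mulVec_apply n v y (by omega) (by omega)]
  linarith [abs_sub (v ⟨y + 1, by omega⟩) (v ⟨y, by omega⟩), hsmall ⟨y, by omega⟩ hy1,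
    hsmall ⟨y + 1, by omega⟩ hy2]

open Matrix in
/-- if a unit eigenvector of `A_p⁰` is localized (small off an interval `J` of
length `≤ 2n^η`), then its eigenvalue satisfies `1/ω ≤ c n^{3η/2}` and the corresponding
eigenvector `ω⁻¹ ∇₊ M^{-1/2} φ` of `A_r⁰` is small off (the interior of) `J`. -/
theorem stmt10 (η mmin mmax : ℝ) (hη : 0 < η) (hη1 : η < 1)
    (h0 : 0 < mmin) (hmm : mmin ≤ mmax) :
    ∃ c : ℝ, 0 < c ∧ ∃ N : ℕ, ∀ n : ℕ, N ≤ n →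
      ∀ m : Fin n → ℝ, (∀ x, m x ∈ Set.Icc mmin mmax) →
      ∀ (φ : Fin n → ℝ) (ω : ℝ), 0 ≤ ω →
        (Ap0 n m).mulVec φ = (ω ^ 2) • φ → φ ⬝ᵥ φ = 1 →
      ∀ J : Finset ℕ, J ⊆ Finset.range (n + 1) →
        (∀ i j k : ℕ, i ∈ J → k ∈ J → i ≤ j → j ≤ k → j ∈ J) →
        (J.card : ℝ) ≤ 2 * (n : ℝ) ^ η →
        (∀ x : Fin n, ((x : ℕ) + 1) ∉ J →
          |((invSqrtMass n m).mulVec φ) x| ≤ (n : ℝ) ^ (-1 / η)) →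
        0 < ω ∧ 1 / ω ≤ c * (n : ℝ) ^ (3 * η / 2) ∧
        ∀ x : Fin (n - 1), ((x : ℕ) + 1) ∉ J → ((x : ℕ) + 2) ∉ J →
          |(ω⁻¹ • (nablaPlus n).mulVec ((invSqrtMass n m).mulVec φ)) x|
            ≤ 2 * c * (n : ℝ) ^ (-1 / η + 3 * η / 2) := by
  have hM : 0 < mmax := h0.trans_le hmm
  obtain ⟨N, hN⟩ := eventually_atTop.1 (eventually_localization_regime (M := mmax) hη hη1)
  refine ⟨8 * √mmax, by positivity, N, fun n hn m hm φ ω hω heig hunit J _ _ hJ hsmall => ?_⟩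
  have hn0 : (0 : ℝ) < n := by
    linarith [(hN n hn).2.1, Real.rpow_nonneg (Nat.cast_nonneg n) η]
  have hm0 : ∀ x, 0 < m x := fun x => h0.trans_le (hm x).1
  have hlip := abs_sub_le_of_abs_nablaPlus_mulVec_le
    (abs_nablaPlus_invSqrtMass_mulVec_le hω heig hunit)
  have hmass := (sum_mul_sq_invSqrtMass_mulVec hm0 φ).trans hunit
  have hgap := one_le_mul_rpow_mul_of_localized hmass (fun x => (hm0 x).le) (fun x => (hm x).2)
    hM hlip hω hJ hsmall (hN n hn)
  have hωpos : 0 < ω := hω.lt_of_ne (by rintro rfl; norm_num at hgap)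
  have hinv : 1 / ω ≤ 8 * √mmax * (n : ℝ) ^ (3 * η / 2) := (div_le_iff₀ hωpos).2 hgap
  refine ⟨hωpos, hinv, fun x hx1 hx2 => ?_⟩
  calc |(ω⁻¹ • nablaPlus n *ᵥ (invSqrtMass n m *ᵥ φ)) x|
      = 1 / ω * |(nablaPlus n *ᵥ (invSqrtMass n m *ᵥ φ)) x| := by
        rw [Pi.smul_apply, smul_eq_mul, abs_mul, abs_of_pos (inv_pos.2 hωpos), one_div]
    _ ≤ 8 * √mmax * (n : ℝ) ^ (3 * η / 2) * (2 * (n : ℝ) ^ (-1 / η)) :=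
        mul_le_mul hinv (abs_nablaPlus_mulVec_le_of_localized hsmall x hx1 hx2) (abs_nonneg _)
          (by positivity)
    _ = 2 * (8 * √mmax) * (n : ℝ) ^ (-1 / η + 3 * η / 2) := by
        rw [Real.rpow_add hn0]; ring
end
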